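/- If p ∈ ℝ² \ {(0,0)} is σ-irrational (i.e., p is not on any σ-rational line), then ‖U_σⁿ(p)‖ ≤ 2⁻ⁿ ‖p‖ for all n ≥ 0, where ‖(x,y)‖ = |x| + |y| and U_σ is the square of the accelerated Euclidean algorithm map F_σ. -/

import Mathlib

/-!
A step of `F_σ` on the open first quadrant is a Euclidean division of one coordinate by the
image of the other under `σ` or `σ⁻¹`: if `y < σ x` it replaces `x` by the remainder
`x' = x - k σ⁻¹(y)` with `k ≥ 1` and `0 < x' < σ⁻¹(y)`; if `σ x < y` it replaces `y` by
`y - k σ(x) ∈ (0, σ x)`. A remainder is smaller than the divisor and at most the dividend minus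
the divisor, hence less than half the dividend. The two steps of `U_σ` divide once horizontally and
once vertically, so both coordinates are halved. The point before a step is the image of the
point after it under an element of one of the two monoids that define the rational lines; this is
why σ-irrationality is preserved, and it rules out the degenerate remainders (`0`, or the divisor
itself). The second quadrant is symmetric, and the other two follow because `F_σ` is odd.
-/

open Set

noncomputable section

def hmap (σ : ℝ ≃ ℝ) : (ℝ × ℝ) ≃ (ℝ × ℝ) where
  toFun p := (p.1 + σ.symm p.2, p.2)
  invFun p := (p.1 - σ.symm p.2, p.2)
  left_inv p := by simp
  right_inv p := by simp

def vmap (σ : ℝ ≃ ℝ) : (ℝ × ℝ) ≃ (ℝ × ℝ) where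
  toFun p := (p.1, p.2 + σ p.1)
  invFun p := (p.1, p.2 - σ p.1)
  left_inv p := by simp
  right_inv p := by simp

def Xset : Set (ℝ × ℝ) := {p | p ≠ 0 ∧ 0 ≤ p.1 * p.2 ∧ p.1 ≠ 0}
def Yset : Set (ℝ × ℝ) := {p | p ≠ 0 ∧ p.1 * p.2 ≤ 0 ∧ p.2 ≠ 0}
def Omeg : Set (ℝ × ℝ) := {p | p ≠ 0}

def ratLines (σ : ℝ ≃ ℝ) : Set (Set (ℝ × ℝ)) :=
  {{p : ℝ × ℝ | p.2 = 0}, {p : ℝ × ℝ | p.1 = 0}} ∪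
  ((fun w : Function.End (ℝ × ℝ) => w '' {p : ℝ × ℝ | p.2 = 0}) ''
    ↑(Submonoid.closure {(⇑(hmap σ) : Function.End (ℝ × ℝ)), ⇑(vmap σ)} : Submonoid (Function.End (ℝ × ℝ)))) ∪
  ((fun w : Function.End (ℝ × ℝ) => w '' {p : ℝ × ℝ | p.1 = 0}) ''
    ↑(Submonoid.closure {(⇑(hmap σ).symm : Function.End (ℝ × ℝ)), ⇑(vmap σ).symm} : Submonoid (Function.End (ℝ × ℝ))))

def Aset (σ : ℝ ≃ ℝ) : Set (ℝ × ℝ) := ⇑(hmap σ) '' Xset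
def Bset (σ : ℝ ≃ ℝ) : Set (ℝ × ℝ) := ⇑(vmap σ) '' Xset
def Cset (σ : ℝ ≃ ℝ) : Set (ℝ × ℝ) := ⇑(hmap σ).symm '' Yset
def Dset (σ : ℝ ≃ ℝ) : Set (ℝ × ℝ) := ⇑(vmap σ).symm '' Yset

open scoped Classical in
/-- The accelerated Euclidean algorithm F_σ. -/
noncomputable def Facc (σ : ℝ ≃ ℝ) : ℝ × ℝ → ℝ × ℝ := fun p =>
  if p ∈ Aset σ then
    (if hn : ∃ n : ℕ, (⇑(hmap σ).symm)^[n] p ∈ Bset σ then (⇑(hmap σ).symm)^[Nat.find hn] p else p)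
  else if p ∈ Bset σ then
    (if hn : ∃ n : ℕ, (⇑(vmap σ).symm)^[n] p ∈ Aset σ then (⇑(vmap σ).symm)^[Nat.find hn] p else p)
  else if p ∈ Cset σ then
    (if hn : ∃ n : ℕ, (⇑(hmap σ))^[n] p ∈ Dset σ then (⇑(hmap σ))^[Nat.find hn] p else p)
  else
    (if hn : ∃ n : ℕ, (⇑(vmap σ))^[n] p ∈ Cset σ then (⇑(vmap σ))^[Nat.find hn] p else p)


open scoped Classical in
def firstHit {α : Type*} (f : α → α) (S : Set α) (p : α) : α :=
  if hn : ∃ n : ℕ, f^[n] p ∈ S then f^[Nat.find hn] p else p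

section FirstHit

variable {α : Type*} {f : α → α} {S : Set α}

theorem firstHit_spec {p : α} (h : ∃ n, f^[n] p ∈ S) :
    ∃ k, firstHit f S p = f^[k] p ∧ f^[k] p ∈ S := by
  classical
  exact ⟨Nat.find h, by rw [firstHit, dif_pos h], Nat.find_spec h⟩

theorem firstHit_map_of_commute {g : α → α} (hfg : Function.Commute f g)
    (hS : ∀ x, g x ∈ S ↔ x ∈ S) (p : α) : firstHit f S (g p) = g (firstHit f S p) := by
  classical
  have hiff : ∀ {n}, f^[n] (g p) ∈ S ↔ f^[n] p ∈ S := by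
    intro n; rw [(hfg.iterate_left n).eq, hS]
  by_cases h : ∃ n, f^[n] p ∈ S
  · have h' : ∃ n, f^[n] (g p) ∈ S := h.imp fun _ => hiff.2
    rw [firstHit, firstHit, dif_pos h, dif_pos h', Nat.find_congr' hiff, (hfg.iterate_left _).eq]
  · have h' : ¬∃ n, f^[n] (g p) ∈ S := fun ⟨n, hn⟩ => h ⟨n, hiff.1 hn⟩
    rw [firstHit, firstHit, dif_neg h, dif_neg h']

end FirstHit

theorem mem_image_equiv_iff_of_commute {α : Type*} {e : α ≃ α} {g : α → α} {S : Set α}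
    (he : Function.Commute e.symm g) (hS : ∀ x, g x ∈ S ↔ x ∈ S) (p : α) :
    g p ∈ e '' S ↔ p ∈ e '' S := by
  rw [mem_image_equiv, mem_image_equiv, he.eq, hS]

theorem mapsTo_of_mem_closure {α : Type*} {S : Set (Function.End α)} {Q : Set α}
    (hS : ∀ f ∈ S, MapsTo f Q Q) {m : Function.End α} (hm : m ∈ Submonoid.closure S) :
    MapsTo m Q Q := by
  induction hm using Submonoid.closure_induction with
  | mem f hf => exact hS f hf
  | one => exact mapsTo_id Q
  | mul f g _ _ hf hg => exact hf.comp hg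

theorem commute_of_mem_closure {α : Type*} {S : Set (Function.End α)} {g : α → α}
    (hS : ∀ f ∈ S, Function.Commute f g) {m : Function.End α}
    (hm : m ∈ Submonoid.closure S) :
    Function.Commute m g := by
  induction hm using Submonoid.closure_induction with
  | mem f hf => exact hS f hf
  | one => exact fun _ => rfl
  | mul f g _ _ hf hg => exact hf.comp_left hg

theorem iterate_le_div_pow {α K : Type*} [Field K] [LinearOrder K] [IsStrictOrderedRing K]
    {f : α → α} {N : α → K} {S : Set α} {c : K}
    (hc : 0 ≤ c) (hS : MapsTo f S S) (hN : ∀ x ∈ S, N (f x) ≤ N x / c) {x : α}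
    (hx : x ∈ S) (n : ℕ) : N (f^[n] x) ≤ N x / c ^ n := by
  induction n with
  | zero => simp
  | succ n ih =>
    rw [Function.iterate_succ_apply', pow_succ, ← div_div]
    exact (hN _ (hS.iterate n hx)).trans (div_le_div_of_nonneg_right ih hc)

section Division

variable {K : Type*} [Field K] [LinearOrder K] [IsStrictOrderedRing K] [FloorSemiring K]

theorem exists_nat_sub_mul_mem_Ico {d y : K} (hd : 0 < d) (hy : 0 ≤ y) :
    ∃ n : ℕ, y - n * d ∈ Ico 0 d := by
  refine ⟨⌊y / d⌋₊, ?_, ?_⟩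
  · have := Nat.floor_le (div_nonneg hy hd.le)
    rw [le_div_iff₀ hd] at this
    linarith
  · have := Nat.lt_floor_add_one (y / d)
    rw [div_lt_iff₀ hd] at this
    linarith

theorem exists_nat_sub_mul_mem_Ioc {c x : K} (hc : 0 < c) (hx : 0 < x) :
    ∃ n : ℕ, x - n * c ∈ Ioc 0 c := by
  have hceil : 1 ≤ ⌈x / c⌉₊ := Nat.one_le_iff_ne_zero.2 (Nat.ceil_pos.2 (div_pos hx hc)).ne'
  have hxc : x / c * c = x := div_mul_cancel₀ x hc.ne'
  have hlt := Nat.ceil_lt_add_one (div_pos hx hc).le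
  have hle := Nat.le_ceil (x / c)
  refine ⟨⌈x / c⌉₊ - 1, ?_, ?_⟩ <;> push_cast [hceil] <;> nlinarith

end Division

theorem sub_nat_mul_add_le {R : Type*} [CommRing R] [LinearOrder R] [IsStrictOrderedRing R]
    {c x : R} {k : ℕ} (hc : 0 ≤ c) (h : x - k * c < x) : x - k * c + c ≤ x := by
  have hk : (1 : R) ≤ k := Nat.one_le_cast.2 (Nat.one_le_iff_ne_zero.2 (by rintro rfl; simp at h))
  nlinarith

section Sigma

theorem Function.Odd.equiv_symm {α β : Type*} [Neg α] [Neg β] {e : α ≃ β}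
    (hodd : Function.Odd e) : Function.Odd e.symm := fun y => by
  rw [e.symm_apply_eq, hodd, e.apply_symm_apply]

section Order

variable {α β : Type*} [LinearOrder α] [LinearOrder β] {e : α ≃ β} (he : StrictMono e)
include he

theorem lt_symm_iff {a : α} {b : β} : a < e.symm b ↔ e a < b := by
  rw [← he.lt_iff_lt, e.apply_symm_apply]

theorem symm_lt_iff {a : β} {b : α} : e.symm a < b ↔ a < e b := by
  rw [← he.lt_iff_lt, e.apply_symm_apply]

theorem le_symm_iff {a : α} {b : β} : a ≤ e.symm b ↔ e a ≤ b := by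
  rw [← he.le_iff_le, e.apply_symm_apply]

theorem symm_le_iff {a : β} {b : α} : e.symm a ≤ b ↔ a ≤ e b := by
  rw [← he.le_iff_le, e.apply_symm_apply]

end Order

variable {R : Type*} [Ring R] [LinearOrder R] [IsStrictOrderedRing R] {σ : R ≃ R}
  (hmono : StrictMono σ) (hodd : Function.Odd σ)
include hmono hodd

theorem map_pos_iff {x : R} : 0 < σ x ↔ 0 < x := by
  simpa [hodd.map_zero] using hmono.lt_iff_lt (a := 0) (b := x)

theorem map_lt_zero_iff {x : R} : σ x < 0 ↔ x < 0 := by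
  simpa [hodd.map_zero] using hmono.lt_iff_lt (a := x) (b := 0)

theorem symm_pos_iff {y : R} : 0 < σ.symm y ↔ 0 < y := by
  rw [lt_symm_iff hmono, hodd.map_zero]

theorem symm_lt_zero_iff {y : R} : σ.symm y < 0 ↔ y < 0 := by
  rw [symm_lt_iff hmono, hodd.map_zero]

theorem mul_map_nonneg (x : R) : 0 ≤ x * σ x := by
  rcases le_total 0 x with hx | hx
  · exact mul_nonneg hx (by simpa [hodd.map_zero] using hmono.monotone hx)
  · exact mul_nonneg_of_nonpos_of_nonpos hx (by simpa [hodd.map_zero] using hmono.monotone hx)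

theorem symm_mul_nonneg (y : R) : 0 ≤ σ.symm y * y := by
  simpa [mul_comm] using mul_map_nonneg hmono hodd (σ.symm y)

end Sigma

section Shears

variable {σ : ℝ ≃ ℝ}

theorem mem_Xset {q : ℝ × ℝ} : q ∈ Xset ↔ 0 ≤ q.1 * q.2 ∧ q.1 ≠ 0 :=
  ⟨fun h => h.2, fun h => ⟨fun h0 => h.2 (by simp [h0]), h⟩⟩

theorem mem_Yset {q : ℝ × ℝ} : q ∈ Yset ↔ q.1 * q.2 ≤ 0 ∧ q.2 ≠ 0 :=
  ⟨fun h => h.2, fun h => ⟨fun h0 => h.2 (by simp [h0]), h⟩⟩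

theorem mem_Aset {p : ℝ × ℝ} :
    p ∈ Aset σ ↔ 0 ≤ (p.1 - σ.symm p.2) * p.2 ∧ p.1 - σ.symm p.2 ≠ 0 := by
  rw [Aset, mem_image_equiv, mem_Xset]; rfl

theorem mem_Bset {p : ℝ × ℝ} : p ∈ Bset σ ↔ 0 ≤ p.1 * (p.2 - σ p.1) ∧ p.1 ≠ 0 := by
  rw [Bset, mem_image_equiv, mem_Xset]; rfl

theorem mem_Cset {p : ℝ × ℝ} :
    p ∈ Cset σ ↔ (p.1 + σ.symm p.2) * p.2 ≤ 0 ∧ p.2 ≠ 0 := by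
  rw [Cset, mem_image_equiv, mem_Yset]; rfl

theorem mem_Dset {p : ℝ × ℝ} :
    p ∈ Dset σ ↔ p.1 * (p.2 + σ p.1) ≤ 0 ∧ p.2 + σ p.1 ≠ 0 := by
  rw [Dset, mem_image_equiv, mem_Yset]; rfl

theorem hmap_iterate (n : ℕ) (p : ℝ × ℝ) :
    (hmap σ)^[n] p = (p.1 + n * σ.symm p.2, p.2) := by
  induction n with
  | zero => simp
  | succ n ih => rw [Function.iterate_succ_apply', ih]; simp [hmap]; ring

theorem hmap_symm_iterate (n : ℕ) (p : ℝ × ℝ) :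
    (hmap σ).symm^[n] p = (p.1 - n * σ.symm p.2, p.2) := by
  induction n with
  | zero => simp
  | succ n ih => rw [Function.iterate_succ_apply', ih]; simp [hmap]; ring

theorem vmap_iterate (n : ℕ) (p : ℝ × ℝ) :
    (vmap σ)^[n] p = (p.1, p.2 + n * σ p.1) := by
  induction n with
  | zero => simp
  | succ n ih => rw [Function.iterate_succ_apply', ih]; simp [vmap]; ring

theorem vmap_symm_iterate (n : ℕ) (p : ℝ × ℝ) :
    (vmap σ).symm^[n] p = (p.1, p.2 - n * σ p.1) := by
  induction n with
  | zero => simp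
  | succ n ih => rw [Function.iterate_succ_apply', ih]; simp [vmap]; ring

variable (hodd : Function.Odd σ)
include hodd

theorem commute_hmap_neg : Function.Commute (hmap σ) Neg.neg := fun p => by
  simp [hmap, hodd.equiv_symm p.2]; ring

theorem commute_hmap_symm_neg : Function.Commute (hmap σ).symm Neg.neg := fun p => by
  simp [hmap, hodd.equiv_symm p.2]; ring

theorem commute_vmap_neg : Function.Commute (vmap σ) Neg.neg := fun p => by
  simp [vmap, hodd p.1]; ring

theorem commute_vmap_symm_neg : Function.Commute (vmap σ).symm Neg.neg := fun p => by
  simp [vmap, hodd p.1]; ring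

end Shears

section Branches

variable {σ : ℝ ≃ ℝ}

open scoped Classical in
theorem Facc_eq_ite (p : ℝ × ℝ) : Facc σ p =
    if p ∈ Aset σ then firstHit (hmap σ).symm (Bset σ) p
    else if p ∈ Bset σ then firstHit (vmap σ).symm (Aset σ) p
    else if p ∈ Cset σ then firstHit (hmap σ) (Dset σ) p
    else firstHit (vmap σ) (Cset σ) p :=
  rfl

theorem Facc_eq_of_mem_Aset {p : ℝ × ℝ} (hA : p ∈ Aset σ) :
    Facc σ p = firstHit (hmap σ).symm (Bset σ) p :=
  if_pos hA

theorem Facc_eq_of_mem_Bset {p : ℝ × ℝ} (hA : p ∉ Aset σ) (hB : p ∈ Bset σ) :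
    Facc σ p = firstHit (vmap σ).symm (Aset σ) p := by
  rw [Facc, if_neg hA, if_pos hB]; rfl

theorem Facc_eq_of_mem_Cset {p : ℝ × ℝ} (hA : p ∉ Aset σ) (hB : p ∉ Bset σ)
    (hC : p ∈ Cset σ) :
    Facc σ p = firstHit (hmap σ) (Dset σ) p := by
  rw [Facc, if_neg hA, if_neg hB, if_pos hC]; rfl

theorem Facc_eq_of_notMem_Cset {p : ℝ × ℝ} (hA : p ∉ Aset σ) (hB : p ∉ Bset σ)
    (hC : p ∉ Cset σ) : Facc σ p = firstHit (vmap σ) (Cset σ) p := by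
  rw [Facc, if_neg hA, if_neg hB, if_neg hC]; rfl

theorem Facc_neg (hodd : Function.Odd σ) (p : ℝ × ℝ) : Facc σ (-p) = -Facc σ p := by
  have hX : ∀ q, -q ∈ Xset ↔ q ∈ Xset := by simp [mem_Xset]
  have hY : ∀ q, -q ∈ Yset ↔ q ∈ Yset := by simp [mem_Yset]
  have hA : ∀ q, -q ∈ Aset σ ↔ q ∈ Aset σ :=
    mem_image_equiv_iff_of_commute (commute_hmap_symm_neg hodd) hX
  have hB : ∀ q, -q ∈ Bset σ ↔ q ∈ Bset σ :=
    mem_image_equiv_iff_of_commute (commute_vmap_symm_neg hodd) hX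
  have hC : ∀ q, -q ∈ Cset σ ↔ q ∈ Cset σ :=
    mem_image_equiv_iff_of_commute (commute_hmap_neg hodd) hY
  have hD : ∀ q, -q ∈ Dset σ ↔ q ∈ Dset σ :=
    mem_image_equiv_iff_of_commute (commute_vmap_neg hodd) hY
  classical
  rw [Facc_eq_ite, Facc_eq_ite]
  simp only [hA, hB, hC]
  split_ifs
  · exact firstHit_map_of_commute (commute_hmap_symm_neg hodd) hB p
  · exact firstHit_map_of_commute (commute_vmap_symm_neg hodd) hA p
  · exact firstHit_map_of_commute (commute_hmap_neg hodd) hD p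
  · exact firstHit_map_of_commute (commute_vmap_neg hodd) hC p

end Branches

abbrev shearMonoid (σ : ℝ ≃ ℝ) : Submonoid (Function.End (ℝ × ℝ)) :=
  Submonoid.closure {⇑(hmap σ), ⇑(vmap σ)}

abbrev invShearMonoid (σ : ℝ ≃ ℝ) : Submonoid (Function.End (ℝ × ℝ)) :=
  Submonoid.closure {⇑(hmap σ).symm, ⇑(vmap σ).symm}

def SigmaIrrational (σ : ℝ ≃ ℝ) (p : ℝ × ℝ) : Prop := ∀ L ∈ ratLines σ, p ∉ L

section RationalLines

variable {σ : ℝ ≃ ℝ}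

theorem hmap_mem_shearMonoid : (⇑(hmap σ) : Function.End (ℝ × ℝ)) ∈ shearMonoid σ :=
  Submonoid.subset_closure (mem_insert _ _)

theorem vmap_mem_shearMonoid : (⇑(vmap σ) : Function.End (ℝ × ℝ)) ∈ shearMonoid σ :=
  Submonoid.subset_closure (mem_insert_of_mem _ (mem_singleton _))

theorem hmap_symm_mem_invShearMonoid :
    (⇑(hmap σ).symm : Function.End (ℝ × ℝ)) ∈ invShearMonoid σ :=
  Submonoid.subset_closure (mem_insert _ _)

theorem vmap_symm_mem_invShearMonoid :
    (⇑(vmap σ).symm : Function.End (ℝ × ℝ)) ∈ invShearMonoid σ :=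
  Submonoid.subset_closure (mem_insert_of_mem _ (mem_singleton _))

theorem image_Ox_mem_ratLines {m : Function.End (ℝ × ℝ)} (hm : m ∈ shearMonoid σ) :
    m '' {p | p.2 = 0} ∈ ratLines σ :=
  Or.inl (Or.inr ⟨m, hm, rfl⟩)

theorem image_Oy_mem_ratLines {m : Function.End (ℝ × ℝ)} (hm : m ∈ invShearMonoid σ) :
    m '' {p | p.1 = 0} ∈ ratLines σ :=
  Or.inr ⟨m, hm, rfl⟩

theorem neg_mem_of_mem_ratLines (hodd : Function.Odd σ) {L : Set (ℝ × ℝ)}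
    (hL : L ∈ ratLines σ) {q : ℝ × ℝ} (hq : q ∈ L) : -q ∈ L := by
  rcases hL with (hL | ⟨m, hm, rfl⟩) | ⟨m, hm, rfl⟩
  · rcases hL with rfl | rfl <;> simpa using hq
  · obtain ⟨r, hr, rfl⟩ := hq
    have hcomm : Function.Commute m Neg.neg := commute_of_mem_closure (by
      rintro f (rfl | rfl)
      exacts [commute_hmap_neg hodd, commute_vmap_neg hodd]) hm
    exact ⟨-r, by simpa using hr, hcomm r⟩
  · obtain ⟨r, hr, rfl⟩ := hq
    have hcomm : Function.Commute m Neg.neg := commute_of_mem_closure (by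
      rintro f (rfl | rfl)
      exacts [commute_hmap_symm_neg hodd, commute_vmap_symm_neg hodd]) hm
    exact ⟨-r, by simpa using hr, hcomm r⟩

variable (hmono : StrictMono σ) (hodd : Function.Odd σ)
include hmono hodd

theorem mapsTo_of_mem_shearMonoid {m : Function.End (ℝ × ℝ)} (hm : m ∈ shearMonoid σ) :
    MapsTo m {q | 0 ≤ q.1 * q.2} {q | 0 ≤ q.1 * q.2} := by
  refine mapsTo_of_mem_closure ?_ hm
  rintro f (rfl | rfl) q (hq : 0 ≤ q.1 * q.2)
  · show 0 ≤ (q.1 + σ.symm q.2) * q.2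
    nlinarith [symm_mul_nonneg hmono hodd q.2]
  · show 0 ≤ q.1 * (q.2 + σ q.1)
    nlinarith [mul_map_nonneg hmono hodd q.1]

theorem mapsTo_of_mem_invShearMonoid {m : Function.End (ℝ × ℝ)}
    (hm : m ∈ invShearMonoid σ) :
    MapsTo m {q | q.1 * q.2 ≤ 0} {q | q.1 * q.2 ≤ 0} := by
  refine mapsTo_of_mem_closure ?_ hm
  rintro f (rfl | rfl) q (hq : q.1 * q.2 ≤ 0)
  · show (q.1 - σ.symm q.2) * q.2 ≤ 0
    nlinarith [symm_mul_nonneg hmono hodd q.2]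
  · show q.1 * (q.2 - σ q.1) ≤ 0
    nlinarith [mul_map_nonneg hmono hodd q.1]

end RationalLines

namespace SigmaIrrational

variable {σ : ℝ ≃ ℝ} {p : ℝ × ℝ}

theorem fst_ne_zero (hp : SigmaIrrational σ p) : p.1 ≠ 0 :=
  hp _ (Or.inl (Or.inl (mem_insert_of_mem _ rfl)))

theorem snd_ne_zero (hp : SigmaIrrational σ p) : p.2 ≠ 0 :=
  hp _ (Or.inl (Or.inl (mem_insert _ _)))

theorem snd_ne_map_fst (hp : SigmaIrrational σ p) : p.2 ≠ σ p.1 := fun h =>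
  hp _ (image_Ox_mem_ratLines vmap_mem_shearMonoid)
    ⟨(p.1, 0), rfl, Prod.ext rfl (by simp [vmap, h])⟩

theorem snd_ne_neg_map_fst (hodd : Function.Odd σ) (hp : SigmaIrrational σ p) :
    p.2 ≠ -σ p.1 := fun h =>
  hp _ (image_Oy_mem_ratLines hmap_symm_mem_invShearMonoid)
    ⟨(0, p.2), rfl, Prod.ext (by simp [hmap, h, ← hodd p.1]) rfl⟩

theorem neg (hodd : Function.Odd σ) (hp : SigmaIrrational σ p) : SigmaIrrational σ (-p) :=
  fun _ hL h => hp _ hL (by simpa using neg_mem_of_mem_ratLines hodd hL h)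

theorem neg_iff (hodd : Function.Odd σ) : SigmaIrrational σ (-p) ↔ SigmaIrrational σ p :=
  ⟨fun h => by simpa using h.neg hodd, neg hodd⟩

variable (hmono : StrictMono σ) (hodd : Function.Odd σ)
include hmono hodd

theorem of_shearMonoid (hp : SigmaIrrational σ p) {m : Function.End (ℝ × ℝ)}
    (hm : m ∈ shearMonoid σ) {q : ℝ × ℝ} (hq : m q = p) (hq0 : 0 ≤ q.1 * q.2)
    (hq1 : q.1 ≠ 0) : SigmaIrrational σ q := by
  have hq2 : q.2 ≠ 0 := fun h => hp _ (image_Ox_mem_ratLines hm) ⟨q, h, hq⟩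
  rintro L ((hL | ⟨w, hw, rfl⟩) | ⟨w, hw, rfl⟩) hqL
  · rcases hL with rfl | rfl
    exacts [hq2 hqL, hq1 hqL]
  · obtain ⟨r, hr, rfl⟩ := hqL
    exact hp _ (image_Ox_mem_ratLines (mul_mem hm hw)) ⟨r, hr, hq⟩
  · -- the lines of the second kind lie in the closed quadrants where `x y ≤ 0`
    obtain ⟨r, hr, rfl⟩ := hqL
    have : (w r).1 * (w r).2 ≤ 0 :=
      mapsTo_of_mem_invShearMonoid hmono hodd hw (show r.1 * r.2 ≤ 0 by simp [hr.out])
    rcases mul_eq_zero.1 (le_antisymm this hq0) with h | h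
    exacts [hq1 h, hq2 h]

theorem of_invShearMonoid (hp : SigmaIrrational σ p) {m : Function.End (ℝ × ℝ)}
    (hm : m ∈ invShearMonoid σ) {q : ℝ × ℝ} (hq : m q = p) (hq0 : q.1 * q.2 ≤ 0)
    (hq2 : q.2 ≠ 0) : SigmaIrrational σ q := by
  have hq1 : q.1 ≠ 0 := fun h => hp _ (image_Oy_mem_ratLines hm) ⟨q, h, hq⟩
  rintro L ((hL | ⟨w, hw, rfl⟩) | ⟨w, hw, rfl⟩) hqL
  · rcases hL with rfl | rfl
    exacts [hq2 hqL, hq1 hqL]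
  · obtain ⟨r, hr, rfl⟩ := hqL
    have : 0 ≤ (w r).1 * (w r).2 :=
      mapsTo_of_mem_shearMonoid hmono hodd hw (show 0 ≤ r.1 * r.2 by simp [hr.out])
    rcases mul_eq_zero.1 (le_antisymm hq0 this) with h | h
    exacts [hq1 h, hq2 h]
  · obtain ⟨r, hr, rfl⟩ := hqL
    exact hp _ (image_Oy_mem_ratLines (mul_mem hm hw)) ⟨r, hr, hq⟩

end SigmaIrrational

section Slices

variable {σ : ℝ ≃ ℝ} (hmono : StrictMono σ) (hodd : Function.Odd σ)
include hmono hodd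

theorem mk_mem_Aset_iff {x s : ℝ} (hx : 0 < x) : (x, s) ∈ Aset σ ↔ s ∈ Ico 0 (σ x) := by
  rw [mem_Aset, mem_Ico, ← symm_lt_iff hmono, sub_ne_zero, ne_comm]
  constructor
  · rintro ⟨h, hne⟩
    rcases lt_trichotomy s 0 with hs | rfl | hs
    · nlinarith [(symm_lt_zero_iff hmono hodd).2 hs]
    · simpa [hodd.equiv_symm.map_zero] using hx
    · exact ⟨hs.le, lt_of_le_of_ne (by nlinarith) hne⟩
  · rintro ⟨hs, hlt⟩
    exact ⟨mul_nonneg (by linarith) hs, hlt.ne⟩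

theorem mk_mem_Bset_iff {t y : ℝ} (hy : 0 < y) :
    (t, y) ∈ Bset σ ↔ t ∈ Ioc 0 (σ.symm y) := by
  rw [mem_Bset, mem_Ioc, le_symm_iff hmono]
  constructor
  · rintro ⟨h, hne⟩
    rcases lt_or_gt_of_ne hne with ht | ht
    · nlinarith [(map_lt_zero_iff hmono hodd).2 ht]
    · exact ⟨ht, by nlinarith⟩
  · rintro ⟨ht, hle⟩
    exact ⟨mul_nonneg ht.le (by linarith), ht.ne'⟩

theorem mk_mem_Cset_iff {x s : ℝ} (hx : x < 0) : (x, s) ∈ Cset σ ↔ s ∈ Ioc 0 (-σ x) := by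
  rw [mem_Cset, mem_Ioc, ← hodd, ← symm_le_iff hmono]
  constructor
  · rintro ⟨h, hne⟩
    rcases lt_or_gt_of_ne hne with hs | hs
    · nlinarith [(symm_lt_zero_iff hmono hodd).2 hs]
    · exact ⟨hs, by nlinarith⟩
  · rintro ⟨hs, hle⟩
    exact ⟨mul_nonpos_of_nonpos_of_nonneg (by linarith) hs.le, hs.ne'⟩

theorem mk_mem_Dset_iff {t y : ℝ} (hy : 0 < y) :
    (t, y) ∈ Dset σ ↔ t ∈ Ioc (-σ.symm y) 0 := by
  rw [mem_Dset, mem_Ioc, ← hodd.equiv_symm, symm_lt_iff hmono]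
  constructor
  · rintro ⟨h, hne⟩
    rcases lt_trichotomy t 0 with ht | rfl | ht
    · refine ⟨lt_of_le_of_ne ?_ (fun h' => hne (by linarith)), ht.le⟩
      nlinarith
    · simpa [hodd.map_zero] using hy
    · nlinarith [(map_pos_iff hmono hodd).2 ht]
  · rintro ⟨hlt, ht⟩
    exact ⟨mul_nonpos_of_nonpos_of_nonneg ht (by linarith), by linarith⟩

theorem mk_notMem_Aset_and_notMem_Bset {x y : ℝ} (hx : x < 0) (hy : 0 < y) :
    (x, y) ∉ Aset σ ∧ (x, y) ∉ Bset σ := by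
  rw [mem_Aset, mem_Bset]
  have h1 := (symm_pos_iff hmono hodd).2 hy
  have h2 := (map_lt_zero_iff hmono hodd).2 hx
  constructor
  · rintro ⟨h, -⟩
    nlinarith
  · rintro ⟨h, -⟩
    nlinarith

end Slices

section Steps

variable {σ : ℝ ≃ ℝ} (hmono : StrictMono σ) (hodd : Function.Odd σ)
include hmono hodd

theorem exists_Facc_eq_of_lt_map {x y : ℝ} (hp : SigmaIrrational σ (x, y)) (hx : 0 < x)
    (hy : 0 < y) (hyx : y < σ x) :
    ∃ x', Facc σ (x, y) = (x', y) ∧ 0 < x' ∧ x' < σ.symm y ∧ x' + σ.symm y ≤ x ∧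
      SigmaIrrational σ (x', y) := by
  set c := σ.symm y
  have hc : 0 < c := (symm_pos_iff hmono hodd).2 hy
  have hcx : c < x := (symm_lt_iff hmono).2 hyx
  have hslice (n : ℕ) : (hmap σ).symm^[n] (x, y) ∈ Bset σ ↔ x - n * c ∈ Ioc 0 c := by
    rw [hmap_symm_iterate, mk_mem_Bset_iff hmono hodd hy]
  obtain ⟨n, hn⟩ := exists_nat_sub_mul_mem_Ioc hc hx
  -- Only the slice condition at the hitting time is used, not its minimality.
  obtain ⟨k, hF, hk⟩ := firstHit_spec ⟨n, (hslice n).2 hn⟩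
  rw [hslice] at hk
  have hirr : SigmaIrrational σ (x - k * c, y) :=
    hp.of_shearMonoid hmono hodd (Submonoid.pow_mem _ hmap_mem_shearMonoid k)
      (show (hmap σ)^[k] _ = _ by simp [hmap_iterate, c]) (mul_nonneg hk.1.le hy.le) hk.1.ne'
  have hlt : x - k * c < c := lt_of_le_of_ne hk.2 fun h => hirr.snd_ne_map_fst (by simp [h, c])
  refine ⟨x - k * c, ?_, hk.1, hlt, sub_nat_mul_add_le hc.le (by linarith), hirr⟩
  have hA : (x, y) ∈ Aset σ := (mk_mem_Aset_iff hmono hodd hx).2 ⟨hy.le, hyx⟩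
  rw [Facc_eq_of_mem_Aset hA, hF, hmap_symm_iterate]

theorem exists_Facc_eq_of_map_lt {x y : ℝ} (hp : SigmaIrrational σ (x, y)) (hx : 0 < x)
    (hxy : σ x < y) : ∃ y', Facc σ (x, y) = (x, y') ∧ 0 < y' ∧ y' < σ x ∧
      y' + σ x ≤ y ∧ SigmaIrrational σ (x, y') := by
  set d := σ x
  have hd : 0 < d := (map_pos_iff hmono hodd).2 hx
  have hy : 0 < y := hd.trans hxy
  have hslice (n : ℕ) : (vmap σ).symm^[n] (x, y) ∈ Aset σ ↔ y - n * d ∈ Ico 0 d := by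
    rw [vmap_symm_iterate, mk_mem_Aset_iff hmono hodd hx]
  obtain ⟨n, hn⟩ := exists_nat_sub_mul_mem_Ico hd hy.le
  obtain ⟨k, hF, hk⟩ := firstHit_spec ⟨n, (hslice n).2 hn⟩
  rw [hslice] at hk
  have hirr : SigmaIrrational σ (x, y - k * d) :=
    hp.of_shearMonoid hmono hodd (Submonoid.pow_mem _ vmap_mem_shearMonoid k)
      (show (vmap σ)^[k] _ = _ by simp [vmap_iterate, d]) (mul_nonneg hx.le hk.1) hx.ne'
  have hpos : 0 < y - k * d := lt_of_le_of_ne hk.1 hirr.snd_ne_zero.symm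
  have hA : (x, y) ∉ Aset σ := fun h => ((mk_mem_Aset_iff hmono hodd hx).1 h).2.not_gt hxy
  have hB : (x, y) ∈ Bset σ :=
    (mk_mem_Bset_iff hmono hodd hy).2 ⟨hx, ((lt_symm_iff hmono).2 hxy).le⟩
  refine ⟨y - k * d, ?_, hpos, hk.2, sub_nat_mul_add_le hd.le (by linarith [hk.2]), hirr⟩
  rw [Facc_eq_of_mem_Bset hA hB, hF, vmap_symm_iterate]

theorem exists_Facc_eq_of_lt_neg_map {x y : ℝ} (hp : SigmaIrrational σ (x, y)) (hx : x < 0)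
    (hy : 0 < y) (hyx : y < -σ x) : ∃ x', Facc σ (x, y) = (x', y) ∧ x' < 0 ∧
      -x' < σ.symm y ∧ -x' + σ.symm y ≤ -x ∧ SigmaIrrational σ (x', y) := by
  set c := σ.symm y
  have hc : 0 < c := (symm_pos_iff hmono hodd).2 hy
  have hcx : c < -x := (symm_lt_iff hmono).2 (by rwa [hodd])
  have hslice (n : ℕ) : (hmap σ)^[n] (x, y) ∈ Dset σ ↔ x + n * c ∈ Ioc (-c) 0 := by
    rw [hmap_iterate, mk_mem_Dset_iff hmono hodd hy]
  obtain ⟨n, hn⟩ := exists_nat_sub_mul_mem_Ico hc (neg_nonneg.2 hx.le)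
  have hn' : x + n * c ∈ Ioc (-c) 0 := ⟨by linarith [hn.2], by linarith [hn.1]⟩
  obtain ⟨k, hF, hk⟩ := firstHit_spec ⟨n, (hslice n).2 hn'⟩
  rw [hslice] at hk
  have hirr : SigmaIrrational σ (x + k * c, y) :=
    hp.of_invShearMonoid hmono hodd (Submonoid.pow_mem _ hmap_symm_mem_invShearMonoid k)
      (show (hmap σ).symm^[k] _ = _ by simp [hmap_symm_iterate, c])
      (mul_nonpos_of_nonpos_of_nonneg hk.2 hy.le) hy.ne'
  have hneg : x + k * c < 0 := lt_of_le_of_ne hk.2 hirr.fst_ne_zero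
  obtain ⟨hA, hB⟩ := mk_notMem_Aset_and_notMem_Bset hmono hodd hx hy
  have hC : (x, y) ∈ Cset σ := (mk_mem_Cset_iff hmono hodd hx).2 ⟨hy, hyx.le⟩
  have hle := sub_nat_mul_add_le (x := -x) (k := k) hc.le (by linarith [hk.1])
  refine ⟨x + k * c, ?_, hneg, by linarith [hk.1], by linarith, hirr⟩
  rw [Facc_eq_of_mem_Cset hA hB hC, hF, hmap_iterate]

theorem exists_Facc_eq_of_neg_map_lt {x y : ℝ} (hp : SigmaIrrational σ (x, y)) (hx : x < 0)
    (hxy : -σ x < y) : ∃ y', Facc σ (x, y) = (x, y') ∧ 0 < y' ∧ y' < -σ x ∧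
      y' + -σ x ≤ y ∧ SigmaIrrational σ (x, y') := by
  set d := -σ x
  have hd : 0 < d := neg_pos.2 ((map_lt_zero_iff hmono hodd).2 hx)
  have hy : 0 < y := hd.trans hxy
  have hslice (n : ℕ) : (vmap σ)^[n] (x, y) ∈ Cset σ ↔ y - n * d ∈ Ioc 0 d := by
    rw [vmap_iterate, mk_mem_Cset_iff hmono hodd hx, mul_neg, sub_neg_eq_add]
  obtain ⟨n, hn⟩ := exists_nat_sub_mul_mem_Ioc hd hy
  obtain ⟨k, hF, hk⟩ := firstHit_spec ⟨n, (hslice n).2 hn⟩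
  rw [hslice] at hk
  have hirr : SigmaIrrational σ (x, y - k * d) :=
    hp.of_invShearMonoid hmono hodd (Submonoid.pow_mem _ vmap_symm_mem_invShearMonoid k)
      (show (vmap σ).symm^[k] _ = _ by simp [vmap_symm_iterate, d])
      (mul_nonpos_of_nonpos_of_nonneg hx.le hk.1.le) hk.1.ne'
  have hlt : y - k * d < d := lt_of_le_of_ne hk.2 (hirr.snd_ne_neg_map_fst hodd)
  obtain ⟨hA, hB⟩ := mk_notMem_Aset_and_notMem_Bset hmono hodd hx hy
  have hC : (x, y) ∉ Cset σ := fun h => ((mk_mem_Cset_iff hmono hodd hx).1 h).2.not_gt hxy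
  refine ⟨y - k * d, ?_, hk.1, hlt, sub_nat_mul_add_le hd.le (by linarith), hirr⟩
  rw [Facc_eq_of_notMem_Cset hA hB hC, hF, vmap_iterate, mul_neg, sub_neg_eq_add]

end Steps

section Contraction

variable {σ : ℝ ≃ ℝ} (hmono : StrictMono σ) (hodd : Function.Odd σ)
include hmono hodd

theorem exists_Facc_Facc_eq_of_pos_pos {x y : ℝ} (hp : SigmaIrrational σ (x, y)) (hx : 0 < x)
    (hy : 0 < y) : ∃ x'' y'', Facc σ (Facc σ (x, y)) = (x'', y'') ∧ 0 < x'' ∧ 0 < y'' ∧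
      x'' + y'' ≤ (x + y) / 2 ∧ SigmaIrrational σ (x'', y'') := by
  rcases lt_trichotomy y (σ x) with hyx | hyx | hxy
  · obtain ⟨x', hF, hx', hx'c, hsum, hirr⟩ := exists_Facc_eq_of_lt_map hmono hodd hp hx hy hyx
    obtain ⟨y'', hF', hy'', hy''d, hsum', hirr'⟩ :=
      exists_Facc_eq_of_map_lt hmono hodd hirr hx' ((lt_symm_iff hmono).1 hx'c)
    exact ⟨x', y'', by rw [hF, hF'], hx', hy'', by linarith, hirr'⟩
  · exact absurd hyx hp.snd_ne_map_fst
  · obtain ⟨y', hF, hy', hy'd, hsum, hirr⟩ := exists_Facc_eq_of_map_lt hmono hodd hp hx hxy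
    obtain ⟨x'', hF', hx'', hx''c, hsum', hirr'⟩ :=
      exists_Facc_eq_of_lt_map hmono hodd hirr hx hy' hy'd
    exact ⟨x'', y', by rw [hF, hF'], hx'', hy', by linarith, hirr'⟩

theorem exists_Facc_Facc_eq_of_neg_pos {x y : ℝ} (hp : SigmaIrrational σ (x, y)) (hx : x < 0)
    (hy : 0 < y) : ∃ x'' y'', Facc σ (Facc σ (x, y)) = (x'', y'') ∧ x'' < 0 ∧ 0 < y'' ∧
      -x'' + y'' ≤ (-x + y) / 2 ∧ SigmaIrrational σ (x'', y'') := by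
  rcases lt_trichotomy y (-σ x) with hyx | hyx | hxy
  · obtain ⟨x', hF, hx', hx'c, hsum, hirr⟩ :=
      exists_Facc_eq_of_lt_neg_map hmono hodd hp hx hy hyx
    have : -σ x' < y := by rw [← hodd]; exact (lt_symm_iff hmono).1 hx'c
    obtain ⟨y'', hF', hy'', hy''d, hsum', hirr'⟩ :=
      exists_Facc_eq_of_neg_map_lt hmono hodd hirr hx' this
    exact ⟨x', y'', by rw [hF, hF'], hx', hy'', by linarith, hirr'⟩
  · exact absurd hyx (hp.snd_ne_neg_map_fst hodd)
  · obtain ⟨y', hF, hy', hy'd, hsum, hirr⟩ := exists_Facc_eq_of_neg_map_lt hmono hodd hp hx hxy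
    obtain ⟨x'', hF', hx'', hx''c, hsum', hirr'⟩ :=
      exists_Facc_eq_of_lt_neg_map hmono hodd hirr hx hy' hy'd
    exact ⟨x'', y', by rw [hF, hF'], hx'', hy', by linarith, hirr'⟩

theorem Facc_Facc_contraction_of_snd_pos {p : ℝ × ℝ} (hp : SigmaIrrational σ p)
    (hy : 0 < p.2) :
    SigmaIrrational σ (Facc σ (Facc σ p)) ∧
      |(Facc σ (Facc σ p)).1| + |(Facc σ (Facc σ p)).2| ≤ (|p.1| + |p.2|) / 2 := by
  obtain ⟨x, y⟩ := p
  rcases lt_or_gt_of_ne hp.fst_ne_zero with hx | hx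
  · obtain ⟨x'', y'', hF, hx'', hy'', hsum, hirr⟩ :=
      exists_Facc_Facc_eq_of_neg_pos hmono hodd hp hx hy
    rw [hF]
    refine ⟨hirr, ?_⟩
    simp only [abs_of_neg hx'', abs_of_pos hy'', abs_of_neg hx, abs_of_pos hy]
    exact hsum
  · obtain ⟨x'', y'', hF, hx'', hy'', hsum, hirr⟩ :=
      exists_Facc_Facc_eq_of_pos_pos hmono hodd hp hx hy
    rw [hF]
    refine ⟨hirr, ?_⟩
    simp only [abs_of_pos hx'', abs_of_pos hy'', abs_of_pos hx, abs_of_pos hy]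
    exact hsum

theorem Facc_Facc_contraction {p : ℝ × ℝ} (hp : SigmaIrrational σ p) :
    SigmaIrrational σ (Facc σ (Facc σ p)) ∧
      |(Facc σ (Facc σ p)).1| + |(Facc σ (Facc σ p)).2| ≤ (|p.1| + |p.2|) / 2 := by
  rcases lt_or_gt_of_ne hp.snd_ne_zero with hy | hy
  · have h := Facc_Facc_contraction_of_snd_pos hmono hodd (hp.neg hodd) (by simpa using hy)
    simpa [Facc_neg hodd, SigmaIrrational.neg_iff hodd] using h
  · exact Facc_Facc_contraction_of_snd_pos hmono hodd hp hy

end Contraction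

/-- U_σ = F_σ² contracts the ℓ¹-norm of σ-irrational points by a factor 2 at each step. -/
theorem stmt_5 (σ : ℝ ≃ ℝ) (hmono : StrictMono σ) (hodd : ∀ x : ℝ, σ (-x) = -σ x)
    (p : ℝ × ℝ) (hp : ∀ L ∈ ratLines σ, p ∉ L) (n : ℕ) :
    |((Facc σ ∘ Facc σ)^[n] p).1| + |((Facc σ ∘ Facc σ)^[n] p).2| ≤
      (|p.1| + |p.2|) / 2 ^ n :=
  iterate_le_div_pow (N := fun q => |q.1| + |q.2|) (S := {q | SigmaIrrational σ q}) zero_le_two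
    (fun _ hq => (Facc_Facc_contraction hmono hodd hq).1)
    (fun _ hq => (Facc_Facc_contraction hmono hodd hq).2) hp n
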